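/- Let β > 0 and suppose J(r) = (1/L) V(|r|/L) where V : [0,∞) → ℝ is Lipschitz continuous with Lipschitz constant ℓ. For 0 ≤ j ≤ k ≤ M−1 define f^l_{jk}(σ) = exp(−β Δ_{jk}J(σ)) − 1. Then for every configuration σ ∈ S_N and every pair j ≤ k, |f^l_{jk}(σ)| ≤ exp(2βQ³ℓ/L²) − 1. -/

import Mathlib

/-!
`Δ_{jk}J(σ)` is a sum of at most `Q²` terms `±(J(x - y) - J̄(j,k))` with `x ∈ C_j`, `y ∈ C_k`.
The coupling `J̄(j,k)` is an average of values `J(x' - y')` over the same pair of cells, where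
`|(x - y) - (x' - y')| ≤ 2Q`, and `J` is `ℓ/L²`-Lipschitz; so each term is at most `2Qℓ/L²`,
whence `|β Δ_{jk}J(σ)| ≤ 2βQ³ℓ/L²`, and `|eᵗ - 1| ≤ e^{|t|} - 1` concludes.
-/

open Finset

/-- The spin value of a site: `true ↦ +1`, `false ↦ -1`. -/
def spin (b : Bool) : ℤ := if b then 1 else -1

/-- The coarse cell `C_k = {kQ, …, (k+1)Q - 1}` inside the lattice `Fin (M*Q)`. -/
def cell (M Q : ℕ) (k : Fin M) : Finset (Fin (M * Q)) :=
  univ.filter (fun x => x.val / Q = k.val)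

/-- The coarse-graining map `F(σ)(k) = Σ_{x ∈ C_k} σ(x)`. -/
def cg (M Q : ℕ) (σ : Fin (M * Q) → Bool) (k : Fin M) : ℤ :=
  ∑ x ∈ cell M Q k, spin (σ x)

/-- The long-range Hamiltonian `H^l(σ) = -(1/2) Σ_{x ≠ y} J(x-y) σ(x) σ(y)`. -/
noncomputable def Hlong (M Q : ℕ) (J : ℤ → ℝ) (σ : Fin (M * Q) → Bool) : ℝ :=
  -(1 / 2) * ∑ x : Fin (M * Q), ∑ y ∈ univ.filter (fun y => y ≠ x),
    J ((x.val : ℤ) - (y.val : ℤ)) * (spin (σ x) : ℝ) * (spin (σ y) : ℝ)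

/-- Cell-averaged couplings `J̄(k,l)`. -/
noncomputable def Jbar (M Q : ℕ) (J : ℤ → ℝ) (k l : Fin M) : ℝ :=
  if k = l then
    (∑ x ∈ cell M Q k, ∑ y ∈ (cell M Q k).filter (fun y => y ≠ x),
        J ((x.val : ℤ) - (y.val : ℤ))) / ((Q : ℝ) * ((Q : ℝ) - 1))
  else
    (∑ x ∈ cell M Q k, ∑ y ∈ cell M Q l, J ((x.val : ℤ) - (y.val : ℤ))) / ((Q : ℝ) ^ 2)

/-- The coarse-grained long-range Hamiltonian `H̄^{l,(0)}(η)`. -/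
noncomputable def Hlong0 (M Q : ℕ) (J : ℤ → ℝ) (η : Fin M → ℤ) : ℝ :=
  -(1 / 2) * (∑ k : Fin M, ∑ l ∈ univ.filter (fun l => l ≠ k),
      Jbar M Q J k l * (η k : ℝ) * (η l : ℝ))
  - (1 / 2) * ∑ k : Fin M, Jbar M Q J k k * ((η k : ℝ) ^ 2 - (Q : ℝ))

/-- The pair term `Δ_{kl}J(σ)` of the decomposition of `H^l - H̄^{l,(0)} ∘ F`. -/
noncomputable def DeltaJ (M Q : ℕ) (J : ℤ → ℝ) (k l : Fin M)
    (σ : Fin (M * Q) → Bool) : ℝ :=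
  -(1 / 2) * (2 - if k = l then 1 else 0) *
    ∑ x ∈ cell M Q k, ∑ y ∈ (cell M Q l).filter (fun y => y ≠ x),
      (J ((x.val : ℤ) - (y.val : ℤ)) - Jbar M Q J k l) * (spin (σ x) : ℝ) * (spin (σ y) : ℝ)

lemma abs_sum_le_of_card_le {ι : Type*} {s : Finset ι} {f : ι → ℝ} {b : ℝ} {n : ℕ}
    (hb : 0 ≤ b) (hs : #s ≤ n) (hf : ∀ i ∈ s, |f i| ≤ b) : |∑ i ∈ s, f i| ≤ n * b :=
  calc |∑ i ∈ s, f i| ≤ #s • b := (abs_sum_le_sum_abs _ _).trans (sum_le_card_nsmul _ _ _ hf)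
    _ ≤ n * b := by rw [nsmul_eq_mul]; gcongr

lemma abs_sub_sum_div_le {ι : Type*} {s : Finset ι} {t : ι → ℝ} {a b n : ℝ} (hn : 0 < n)
    (hs : (#s : ℝ) = n) (ht : ∀ i ∈ s, |a - t i| ≤ b) : |a - (∑ i ∈ s, t i) / n| ≤ b := by
  have hsum : a - (∑ i ∈ s, t i) / n = (∑ i ∈ s, (a - t i)) / n := by
    rw [sum_sub_distrib, sum_const, nsmul_eq_mul, hs]
    field_simp
  rw [hsum, abs_div, abs_of_pos hn, div_le_iff₀ hn, mul_comm, ← hs, ← nsmul_eq_mul]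
  exact (abs_sum_le_sum_abs _ _).trans (sum_le_card_nsmul _ _ _ ht)

lemma abs_exp_sub_one_le_exp_sub_one {t c : ℝ} (ht : |t| ≤ c) :
    |Real.exp t - 1| ≤ Real.exp c - 1 := by
  have hexp_t := Real.add_one_le_exp t
  have hexp_c := Real.add_one_le_exp c
  have hmono := Real.exp_le_exp.mpr ((le_abs_self t).trans ht)
  rw [abs_le]
  constructor <;> linarith [neg_abs_le t]

lemma abs_radial_rescale_sub_le {L l : ℝ} (hL : 0 < L) (hl : 0 ≤ l) {V : ℝ → ℝ}
    (hV : ∀ a b : ℝ, 0 ≤ a → 0 ≤ b → |V a - V b| ≤ l * |a - b|) (r r' : ℝ) :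
    |1 / L * V (|r| / L) - 1 / L * V (|r'| / L)| ≤ l / L ^ 2 * |r - r'| :=
  calc |1 / L * V (|r| / L) - 1 / L * V (|r'| / L)| = |V (|r| / L) - V (|r'| / L)| / L := by
        rw [← mul_sub, abs_mul, abs_of_pos (one_div_pos.mpr hL)]
        ring
    _ ≤ l * |(|r| / L - |r'| / L)| / L := by
        gcongr
        exact hV _ _ (by positivity) (by positivity)
    _ = l / L ^ 2 * |(|r| - |r'|)| := by
        rw [← sub_div, abs_div, abs_of_pos hL]
        ring
    _ ≤ l / L ^ 2 * |r - r'| :=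
        mul_le_mul_of_nonneg_left (abs_abs_sub_abs_le_abs_sub r r') (by positivity)

section Cells

variable {M Q : ℕ}

lemma mem_cell_iff (hQ : 0 < Q) {k : Fin M} {x : Fin (M * Q)} :
    x ∈ cell M Q k ↔ k.val * Q ≤ x.val ∧ x.val < k.val * Q + Q := by
  rw [cell, mem_filter, Nat.div_eq_iff hQ]
  simp only [mem_univ, true_and]
  omega

lemma card_cell (hQ : 0 < Q) (k : Fin M) : #(cell M Q k) = Q := by
  refine card_eq_of_bijective (fun i hi => (⟨k.val * Q + i, ?_⟩ : Fin (M * Q))) ?_ ?_ ?_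
  · calc k.val * Q + i < (k.val + 1) * Q := by rw [Nat.add_mul, one_mul]; omega
      _ ≤ M * Q := Nat.mul_le_mul_right Q k.isLt
  · intro x hx
    rw [mem_cell_iff hQ] at hx
    exact ⟨x.val - k.val * Q, by omega, by ext; simp only; omega⟩
  · intro i hi
    simp only [mem_cell_iff hQ]
    omega
  · intro i j _ _ h
    simpa using h

lemma abs_displacement_sub_le_of_mem_cell (hQ : 0 < Q) {j k : Fin M} {x x' y y' : Fin (M * Q)}
    (hx : x ∈ cell M Q j) (hx' : x' ∈ cell M Q j) (hy : y ∈ cell M Q k) (hy' : y' ∈ cell M Q k) :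
    |(((x.val : ℤ) - y.val : ℤ) : ℝ) - (((x'.val : ℤ) - y'.val : ℤ) : ℝ)| ≤ 2 * Q := by
  rw [mem_cell_iff hQ] at hx hx' hy hy'
  have h : |((x.val : ℤ) - y.val) - ((x'.val : ℤ) - y'.val)| ≤ 2 * Q := by
    rw [abs_le]
    omega
  exact_mod_cast h

end Cells

section LipschitzCoupling

variable {M Q : ℕ} {J : ℤ → ℝ} {c : ℝ}

lemma abs_sub_Jbar_le (hQ : 2 ≤ Q) (hc : 0 ≤ c)
    (hJ : ∀ r r' : ℤ, |J r - J r'| ≤ c * |(r : ℝ) - r'|) {j k : Fin M} {x y : Fin (M * Q)}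
    (hx : x ∈ cell M Q j) (hy : y ∈ cell M Q k) :
    |J ((x.val : ℤ) - y.val) - Jbar M Q J j k| ≤ 2 * Q * c := by
  have hQ₀ : 0 < Q := by omega
  have hQ₂ : (2 : ℝ) ≤ Q := by exact_mod_cast hQ
  have hpair : ∀ x' ∈ cell M Q j, ∀ y' ∈ cell M Q k,
      |J ((x.val : ℤ) - y.val) - J ((x'.val : ℤ) - y'.val)| ≤ 2 * Q * c := fun x' hx' y' hy' =>
    calc _ ≤ c * (2 * Q) := (hJ _ _).trans <| mul_le_mul_of_nonneg_left
            (abs_displacement_sub_le_of_mem_cell hQ₀ hx hx' hy hy') hc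
      _ = 2 * Q * c := mul_comm _ _
  by_cases hjk : j = k
  · subst hjk
    have hcard : ∀ x' ∈ cell M Q j, #((cell M Q j).filter (fun y' => y' ≠ x')) = Q - 1 :=
      fun x' hx' => by rw [filter_ne', card_erase_of_mem hx', card_cell hQ₀]
    rw [Jbar, if_pos rfl, sum_sigma']
    refine abs_sub_sum_div_le (by nlinarith) ?_ fun p hp => ?_
    · rw [card_sigma, sum_congr rfl hcard, sum_const, card_cell hQ₀, smul_eq_mul,
        Nat.cast_mul, Nat.cast_sub (by omega : 1 ≤ Q), Nat.cast_one]
    · rw [mem_sigma, mem_filter] at hp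
      exact hpair _ hp.1 _ hp.2.1
  · rw [Jbar, if_neg hjk, ← sum_product']
    refine abs_sub_sum_div_le (by positivity) ?_ fun p hp => ?_
    · rw [card_product, card_cell hQ₀, card_cell hQ₀]
      push_cast
      ring
    · rw [mem_product] at hp
      exact hpair _ hp.1 _ hp.2

lemma abs_spin (b : Bool) : |((spin b : ℤ) : ℝ)| = 1 := by
  cases b <;> simp [spin]

lemma abs_DeltaJ_le (hQ : 2 ≤ Q) (hc : 0 ≤ c)
    (hJ : ∀ r r' : ℤ, |J r - J r'| ≤ c * |(r : ℝ) - r'|) (j k : Fin M) (σ : Fin (M * Q) → Bool) :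
    |DeltaJ M Q J j k σ| ≤ Q * (Q * (2 * Q * c)) := by
  have hQ₀ : 0 < Q := by omega
  have hprefactor : |-(1 / 2) * (2 - if j = k then (1 : ℝ) else 0)| ≤ 1 := by
    split_ifs <;> norm_num [abs_le]
  have hsum : |∑ x ∈ cell M Q j, ∑ y ∈ (cell M Q k).filter (fun y => y ≠ x),
      (J ((x.val : ℤ) - y.val) - Jbar M Q J j k) * (spin (σ x) : ℝ) * (spin (σ y) : ℝ)|
        ≤ Q * (Q * (2 * Q * c)) := by
    refine abs_sum_le_of_card_le (by positivity) (card_cell hQ₀ j).le fun x hx => ?_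
    refine abs_sum_le_of_card_le (by positivity)
      ((card_filter_le _ _).trans (card_cell hQ₀ k).le) fun y hy => ?_
    rw [abs_mul, abs_mul, abs_spin, abs_spin, mul_one, mul_one]
    exact abs_sub_Jbar_le hQ hc hJ hx (mem_filter.mp hy).1
  rw [DeltaJ, abs_mul]
  exact (mul_le_mul hprefactor hsum (abs_nonneg _) zero_le_one).trans_eq (one_mul _)

end LipschitzCoupling

theorem statement9_general (M Q : ℕ) (hQ : 2 ≤ Q)
    (β : ℝ) (hβ : 0 < β) (L l : ℝ) (hL : 0 < L) (hl : 0 ≤ l)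
    (V : ℝ → ℝ) (hV : ∀ a b : ℝ, 0 ≤ a → 0 ≤ b → |V a - V b| ≤ l * |a - b|)
    (J : ℤ → ℝ) (hJ : ∀ r : ℤ, J r = (1 / L) * V (|(r : ℝ)| / L)) :
    ∀ σ : Fin (M * Q) → Bool, ∀ j k : Fin M, j ≤ k →
      |Real.exp (-β * DeltaJ M Q J j k σ) - 1|
        ≤ Real.exp (2 * β * (Q : ℝ) ^ 3 * l / L ^ 2) - 1 := by
  intro σ j k _
  have hJ_lipschitz : ∀ r r' : ℤ, |J r - J r'| ≤ l / L ^ 2 * |(r : ℝ) - r'| := fun r r' => by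
    rw [hJ, hJ]
    exact abs_radial_rescale_sub_le hL hl hV r r'
  have hΔ := abs_DeltaJ_le hQ (by positivity) hJ_lipschitz j k σ
  apply abs_exp_sub_one_le_exp_sub_one
  calc |-β * DeltaJ M Q J j k σ| = β * |DeltaJ M Q J j k σ| := by
        rw [abs_mul, abs_neg, abs_of_pos hβ]
    _ ≤ β * (Q * (Q * (2 * Q * (l / L ^ 2)))) := by gcongr
    _ = 2 * β * (Q : ℝ) ^ 3 * l / L ^ 2 := by ring

/-- uniform bound on the long-range Mayer terms
`f^l_{jk}(σ) = exp(-β Δ_{jk}J(σ)) - 1`. -/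
theorem statement9 (M Q : ℕ) (hM : 1 ≤ M) (hQ : 2 ≤ Q)
    (β : ℝ) (hβ : 0 < β) (L l : ℝ) (hL : 0 < L) (hl : 0 ≤ l)
    (V : ℝ → ℝ) (hV : ∀ a b : ℝ, 0 ≤ a → 0 ≤ b → |V a - V b| ≤ l * |a - b|)
    (J : ℤ → ℝ) (hJ : ∀ r : ℤ, J r = (1 / L) * V (|(r : ℝ)| / L)) :
    ∀ σ : Fin (M * Q) → Bool, ∀ j k : Fin M, j ≤ k →
      |Real.exp (-β * DeltaJ M Q J j k σ) - 1|
        ≤ Real.exp (2 * β * (Q : ℝ) ^ 3 * l / L ^ 2) - 1 :=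
  statement9_general M Q hQ β hβ L l hL hl V hV J hJ
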